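/- Let G be a simple graph with minimum degree at least 2 and average degree d̄. If a random vertex v is chosen with probability π(v) = d_v/(2|E(G)|), then for every i ≥ 1 the expected number of non-returning walks of i edges starting at v satisfies E[n_i(v)] ≥ d̄(d̄-1)^{i-1}. -/

import Mathlib

variable {V : Type*}

/-- `w : Fin (i+1) → V` is a non-returning walk of `i` edges in `G`:
consecutive vertices are adjacent and there is no immediate backtracking. -/
def IsNR (G : SimpleGraph V) (i : ℕ) (w : Fin (i + 1) → V) : Prop :=
  (∀ j : ℕ, ∀ _h : j < i, G.Adj (w ⟨j, by omega⟩) (w ⟨j + 1, by omega⟩)) ∧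
  (∀ j : ℕ, ∀ _h : j + 2 ≤ i, w ⟨j, by omega⟩ ≠ w ⟨j + 2, by omega⟩)

/-- `nV G i v` : the number of non-returning walks of `i` edges starting at `v`. -/
noncomputable def nV (G : SimpleGraph V) (i : ℕ) (v : V) : ℕ :=
  Nat.card {w : Fin (i + 1) → V // IsNR G i w ∧ w 0 = v}

/-- `nE G i u v` : the number of non-returning walks of `i + 1` edges whose
first edge is the directed edge `(u, v)`. -/
noncomputable def nE (G : SimpleGraph V) (i : ℕ) (u v : V) : ℕ :=
  Nat.card {w : Fin (i + 2) → V // IsNR G (i + 1) w ∧ w 0 = u ∧ w 1 = v}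

/-!
Give a non-returning walk `w = (w₀, …, wᵢ)` the weight `μ(w) = ∏_{0<t<i} (d_{w_t} - 1)⁻¹`, so that
`μ(w) / 2|E|` is the probability that the non-backtracking random walk started from `π` follows
`w`. Since `π` is stationary for that walk, each of its steps is a uniformly distributed directed
edge. Writing `E[n_i(v)] = ∑_w (μ(w) / 2|E|) X(w)` with `X(w) = d_{w₀} ∏_{0<t<i} (d_{w_t} - 1)`,
weighted AM-GM gives `E[n_i(v)] ≥ exp (E[log X])`, and by stationarity
`E[log X] = (∑_v d_v log d_v + (i - 1) ∑_v d_v log (d_v - 1)) / 2|E|`. Jensen's inequality for the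
convex functions `x log x` and `x log (x - 1)` on `[2, ∞)` bounds this below by
`log d̄ + (i - 1) log (d̄ - 1)`.
-/

open Finset Real

lemma Finset.sum_sum_erase {ι R : Type*} [DecidableEq ι] [NonAssocRing R] (s : Finset ι)
    (f : ι → R) : ∑ a ∈ s, ∑ u ∈ s.erase a, f u = ((#s : R) - 1) * ∑ u ∈ s, f u := by
  rw [sum_congr rfl fun a ha => sum_erase_eq_sub ha, sum_sub_distrib, sum_const, nsmul_eq_mul,
    sub_one_mul]

lemma SimpleGraph.sum_sum_neighborFinset_comm [Fintype V] (G : SimpleGraph V) [DecidableRel G.Adj]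
    {M : Type*} [AddCommMonoid M] (h : V → V → M) :
    ∑ a, ∑ b ∈ G.neighborFinset a, h a b = ∑ b, ∑ a ∈ G.neighborFinset b, h a b := by
  simp only [SimpleGraph.neighborFinset_eq_filter, sum_filter]
  rw [sum_comm]
  exact sum_congr rfl fun b _ => sum_congr rfl fun a _ => if_congr (G.adj_comm a b) rfl rfl

lemma convexOn_mul_log_sub {c : ℝ} (hc : 0 < c) :
    ConvexOn ℝ (Set.Ici (2 * c)) fun x => x * log (x - c) := by
  have hsub : ∀ x ∈ Set.Ici (2 * c), x - c ≠ 0 := fun x hx => by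
    rw [Set.mem_Ici] at hx; linarith
  refine convexOn_of_hasDerivWithinAt2_nonneg (convex_Ici _)
    (f' := fun x => log (x - c) + x / (x - c)) (f'' := fun x => 1 / (x - c) - c / (x - c) ^ 2)
    ?_ ?_ ?_ ?_
  · exact continuousOn_id.mul ((continuousOn_id.sub continuousOn_const).log hsub)
  all_goals
    intro x hx
    rw [interior_Ici, Set.mem_Ioi] at hx
    have hx' : x - c ≠ 0 := by linarith
  · have hlog := ((hasDerivAt_id' x).sub_const c).log hx'
    exact ((hasDerivAt_id' x).mul hlog |>.congr_deriv (by ring)).hasDerivWithinAt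
  · have hlog := ((hasDerivAt_id' x).sub_const c).log hx'
    have hdiv := (hasDerivAt_id' x).div ((hasDerivAt_id' x).sub_const c) hx'
    exact (hlog.add hdiv |>.congr_deriv (by field_simp; ring)).hasDerivWithinAt
  · have : 1 / (x - c) - c / (x - c) ^ 2 = (x - 2 * c) / (x - c) ^ 2 := by
      field_simp
      ring
    simp only [this]
    exact div_nonneg (by linarith) (sq_nonneg _)

lemma ConvexOn.card_mul_map_sum_div_card_le {ι : Type*} {s : Set ℝ} {f : ℝ → ℝ}
    (hf : ConvexOn ℝ s f) {t : Finset ι} (ht : t.Nonempty) {p : ι → ℝ} (hp : ∀ i ∈ t, p i ∈ s) :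
    #t * f ((∑ i ∈ t, p i) / #t) ≤ ∑ i ∈ t, f (p i) := by
  have hcard : (0 : ℝ) < #t := by exact_mod_cast ht.card_pos
  have := hf.map_sum_le (w := fun _ => (#t : ℝ)⁻¹) (fun _ _ => by positivity)
    (by rw [sum_const, nsmul_eq_mul, mul_inv_cancel₀ hcard.ne']) hp
  simp only [smul_eq_mul, inv_mul_eq_div, ← sum_div] at this
  rwa [← le_div_iff₀' hcard]

lemma exp_sum_mul_log_le_sum_mul {ι : Type*} (s : Finset ι) {p x : ι → ℝ}
    (hp : ∀ i ∈ s, 0 ≤ p i) (hp1 : ∑ i ∈ s, p i = 1) (hx : ∀ i ∈ s, 0 < x i) :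
    exp (∑ i ∈ s, p i * log (x i)) ≤ ∑ i ∈ s, p i * x i := by
  rw [exp_sum]
  refine le_of_eq_of_le (prod_congr rfl fun i hi => ?_)
    (geom_mean_le_arith_mean_weighted s p x hp hp1 fun i hi => (hx i hi).le)
  rw [rpow_def_of_pos (hx i hi), mul_comm]

section Walks

/-- Vertex `t` of a walk, clamped to the last vertex for `t` past the end
(as for `SimpleGraph.Walk.getVert`). -/
def vertAt {n : ℕ} (w : Fin (n + 1) → V) (t : ℕ) : V := w ⟨min t n, by omega⟩

lemma vertAt_of_le {n t : ℕ} (w : Fin (n + 1) → V) (h : t ≤ n) :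
    vertAt w t = w ⟨t, by omega⟩ := by
  simp [vertAt, h]

lemma vertAt_zero {n : ℕ} (w : Fin (n + 1) → V) : vertAt w 0 = w 0 :=
  vertAt_of_le w (Nat.zero_le n)

lemma vertAt_snoc_of_le {n t : ℕ} (w : Fin (n + 1) → V) (u : V) (h : t ≤ n) :
    vertAt (Fin.snoc w u : Fin (n + 2) → V) t = vertAt w t := by
  rw [vertAt_of_le _ (by omega), vertAt_of_le _ h]
  exact Fin.snoc_castSucc (i := ⟨t, by omega⟩) ..

lemma vertAt_snoc_last {n : ℕ} (w : Fin (n + 1) → V) (u : V) :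
    vertAt (Fin.snoc w u : Fin (n + 2) → V) (n + 1) = u := by
  rw [vertAt_of_le _ le_rfl]
  exact Fin.snoc_last (α := fun _ => V) ..

lemma isNR_iff_vertAt (G : SimpleGraph V) (i : ℕ) (w : Fin (i + 1) → V) :
    IsNR G i w ↔ (∀ j < i, G.Adj (vertAt w j) (vertAt w (j + 1))) ∧
      (∀ j, j + 2 ≤ i → vertAt w j ≠ vertAt w (j + 2)) := by
  refine and_congr (forall_congr' fun j => forall_congr' fun hj => ?_)
    (forall_congr' fun j => forall_congr' fun hj => ?_) <;>
  rw [vertAt_of_le _ (by omega), vertAt_of_le _ (by omega)]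

lemma isNR_snoc_iff (G : SimpleGraph V) (k : ℕ) (w : Fin (k + 2) → V) (u : V) :
    IsNR G (k + 2) (Fin.snoc w u) ↔
      IsNR G (k + 1) w ∧ G.Adj (vertAt w (k + 1)) u ∧ vertAt w k ≠ u := by
  simp only [isNR_iff_vertAt]
  constructor
  · rintro ⟨hadj, hnr⟩
    refine ⟨⟨fun j hj => ?_, fun j hj => ?_⟩, ?_, ?_⟩
    · simpa only [vertAt_snoc_of_le _ _ (by omega : j + 1 ≤ k + 1),
        vertAt_snoc_of_le _ _ (by omega : j ≤ k + 1)] using hadj j (by omega)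
    · simpa only [vertAt_snoc_of_le _ _ (by omega : j + 2 ≤ k + 1),
        vertAt_snoc_of_le _ _ (by omega : j ≤ k + 1)] using hnr j (by omega)
    · simpa only [vertAt_snoc_of_le _ _ le_rfl, vertAt_snoc_last] using hadj (k + 1) (by omega)
    · simpa only [vertAt_snoc_of_le _ _ (by omega : k ≤ k + 1), vertAt_snoc_last]
        using hnr k (by omega)
  · rintro ⟨⟨hadj, hnr⟩, hlast, hback⟩
    refine ⟨fun j hj => ?_, fun j hj => ?_⟩
    · rw [vertAt_snoc_of_le _ _ (by omega : j ≤ k + 1)]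
      obtain hj | rfl : j < k + 1 ∨ j = k + 1 := by omega
      · rw [vertAt_snoc_of_le _ _ (by omega : j + 1 ≤ k + 1)]; exact hadj j hj
      · rwa [vertAt_snoc_last]
    · rw [vertAt_snoc_of_le _ _ (by omega : j ≤ k + 1)]
      obtain hj | rfl : j < k ∨ j = k := by omega
      · rw [vertAt_snoc_of_le _ _ (by omega : j + 2 ≤ k + 1)]; exact hnr j (by omega)
      · rwa [vertAt_snoc_last]

lemma isNR_one_iff (G : SimpleGraph V) (w : Fin 2 → V) : IsNR G 1 w ↔ G.Adj (w 0) (w 1) := by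
  refine ⟨fun h => h.1 0 one_pos, fun h => ⟨fun j hj => ?_, fun j hj => by omega⟩⟩
  obtain rfl : j = 0 := by omega
  exact h

end Walks

section Weights

variable [Fintype V] (G : SimpleGraph V)

open Classical in
noncomputable def nrWalks (i : ℕ) : Finset (Fin (i + 1) → V) := {w | IsNR G i w}

variable {G} in
@[simp] lemma mem_nrWalks {i : ℕ} {w : Fin (i + 1) → V} : w ∈ nrWalks G i ↔ IsNR G i w := by
  simp [nrWalks]

lemma sum_mul_nV (i : ℕ) (f : V → ℝ) :
    ∑ v, f v * nV G i v = ∑ w ∈ nrWalks G i, f (w 0) := by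
  classical
  have hnV : ∀ v, nV G i v = #{w ∈ nrWalks G i | w 0 = v} := fun v => by
    rw [nV, Nat.card_eq_fintype_card, Fintype.card_subtype, nrWalks, filter_filter]
  rw [← sum_fiberwise (nrWalks G i) (fun w => w 0)]
  refine sum_congr rfl fun v _ => ?_
  rw [sum_congr rfl fun w hw => by rw [(mem_filter.1 hw).2], sum_const, nsmul_eq_mul, hnV, mul_comm]

variable [DecidableRel G.Adj]

lemma sum_nrWalks_one {M : Type*} [AddCommMonoid M] (F : (Fin 2 → V) → M) :
    ∑ w ∈ nrWalks G 1, F w = ∑ a, ∑ b ∈ G.neighborFinset a, F ![a, b] := by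
  rw [← sum_sigma univ (fun a => G.neighborFinset a) fun p => F ![p.1, p.2]]
  refine sum_nbij' (fun w => ⟨w 0, w 1⟩) (fun p => ![p.1, p.2]) ?_ ?_ ?_ ?_ ?_
  · intro w hw
    simpa [isNR_one_iff] using hw
  · rintro ⟨a, b⟩ hab
    simpa [isNR_one_iff] using hab
  · intro w _
    ext j
    fin_cases j <;> rfl
  · rintro ⟨a, b⟩ _
    rfl
  · intro w _
    congr
    ext j
    fin_cases j <;> rfl

lemma sum_nrWalks_succ [DecidableEq V] {M : Type*} [AddCommMonoid M] (k : ℕ)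
    (F : (Fin (k + 3) → V) → M) :
    ∑ w ∈ nrWalks G (k + 2), F w =
      ∑ w ∈ nrWalks G (k + 1),
        ∑ u ∈ (G.neighborFinset (vertAt w (k + 1))).erase (vertAt w k), F (Fin.snoc w u) := by
  rw [← sum_sigma _ (fun w => (G.neighborFinset (vertAt w (k + 1))).erase (vertAt w k))
    fun p => F (Fin.snoc p.1 p.2)]
  refine sum_nbij' (fun w => ⟨Fin.init w, w (Fin.last _)⟩) (fun p => Fin.snoc p.1 p.2)
    ?_ ?_ ?_ ?_ ?_
  · intro w hw
    rw [mem_nrWalks, ← Fin.snoc_init_self w, isNR_snoc_iff] at hw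
    simp only [mem_sigma, mem_nrWalks, mem_erase, SimpleGraph.mem_neighborFinset]
    exact ⟨hw.1, Ne.symm hw.2.2, hw.2.1⟩
  · rintro ⟨w, u⟩ hwu
    simp only [mem_sigma, mem_nrWalks, mem_erase, SimpleGraph.mem_neighborFinset] at hwu
    simpa [isNR_snoc_iff] using ⟨hwu.1, hwu.2.2, Ne.symm hwu.2.1⟩
  · intro w _
    exact Fin.snoc_init_self w
  · rintro ⟨w, u⟩ _
    simp
  · intro w _
    simp

noncomputable def nrWeight (i : ℕ) (w : Fin (i + 1) → V) : ℝ :=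
  ∏ t ∈ Ico 1 i, ((G.degree (vertAt w t) : ℝ) - 1)⁻¹

lemma nrWeight_one (w : Fin 2 → V) : nrWeight G 1 w = 1 := by
  simp [nrWeight]

lemma nrWeight_snoc (k : ℕ) (w : Fin (k + 2) → V) (u : V) :
    nrWeight G (k + 2) (Fin.snoc w u) =
      nrWeight G (k + 1) w * ((G.degree (vertAt w (k + 1)) : ℝ) - 1)⁻¹ := by
  rw [nrWeight, prod_Ico_succ_top (by omega), vertAt_snoc_of_le _ _ le_rfl, nrWeight]
  congr 1
  exact prod_congr rfl fun t ht => by rw [vertAt_snoc_of_le _ _ (by simp at ht; omega)]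

lemma nrWeight_nonneg (hdeg : ∀ v, 1 ≤ G.degree v) (i : ℕ) (w : Fin (i + 1) → V) :
    0 ≤ nrWeight G i w :=
  prod_nonneg fun t _ => inv_nonneg.2 (sub_nonneg.2 (by exact_mod_cast hdeg _))

lemma nrWeight_mul_prod (hdeg : ∀ v, 2 ≤ G.degree v) (i : ℕ) (w : Fin (i + 1) → V) :
    nrWeight G i w * ∏ t ∈ Ico 1 i, ((G.degree (vertAt w t) : ℝ) - 1) = 1 := by
  rw [nrWeight, ← prod_mul_distrib]
  exact prod_eq_one fun t _ => inv_mul_cancel₀ (sub_pos.2 (by exact_mod_cast hdeg _)).ne'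

end Weights

section Stationarity

variable [Fintype V] (G : SimpleGraph V) [DecidableRel G.Adj]

theorem sum_nrWeight_mul_edge (hdeg : ∀ v, 2 ≤ G.degree v) {i t : ℕ} (ht : t < i)
    (g : V → V → ℝ) :
    ∑ w ∈ nrWalks G i, nrWeight G i w * g (vertAt w t) (vertAt w (t + 1)) =
      ∑ a, ∑ b ∈ G.neighborFinset a, g a b := by
  classical
  obtain ⟨k, rfl⟩ : ∃ k, i = k + 1 := ⟨i - 1, by omega⟩
  induction k generalizing t g with
  | zero =>
    obtain rfl : t = 0 := by omega
    rw [sum_nrWalks_one]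
    simp [nrWeight_one, vertAt]
  | succ k ih =>
    have hpos : ∀ v, (G.degree v : ℝ) - 1 ≠ 0 := fun v => (sub_pos.2 (by exact_mod_cast hdeg v)).ne'
    have hsnoc : ∀ (w : Fin (k + 2) → V) (s : Finset V) (F : V → ℝ),
        ∑ u ∈ s, nrWeight G (k + 2) (Fin.snoc w u) * F u =
          nrWeight G (k + 1) w * (((G.degree (vertAt w (k + 1)) : ℝ) - 1)⁻¹ * ∑ u ∈ s, F u) :=
      fun w s F => by simp_rw [nrWeight_snoc, mul_sum, mul_assoc]
    rw [sum_nrWalks_succ]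
    obtain ht | rfl : t < k + 1 ∨ t = k + 1 := by omega
    · rw [← ih g ht]
      refine sum_congr rfl fun w hw => ?_
      simp only [vertAt_snoc_of_le _ _ (by omega : t ≤ k + 1),
        vertAt_snoc_of_le _ _ (by omega : t + 1 ≤ k + 1)]
      have hback : vertAt w k ∈ G.neighborFinset (vertAt w (k + 1)) := by
        rw [SimpleGraph.mem_neighborFinset]
        exact (((isNR_iff_vertAt G _ w).1 (mem_nrWalks.1 hw)).1 k (by omega)).symm
      rw [hsnoc, sum_const, card_erase_of_mem hback, SimpleGraph.card_neighborFinset_eq_degree,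
        nsmul_eq_mul, Nat.cast_pred (by have := hdeg (vertAt w (k + 1)); omega),
        inv_mul_cancel_left₀ (hpos _)]
    · -- each directed edge `(b, u)` continues exactly `deg b - 1` directed edges `(a, b)`
      simp only [vertAt_snoc_of_le _ _ le_rfl, vertAt_snoc_last, hsnoc]
      have := ih (fun a b => ((G.degree b : ℝ) - 1)⁻¹ * ∑ u ∈ (G.neighborFinset b).erase a, g b u)
        k.lt_succ_self
      rw [this, G.sum_sum_neighborFinset_comm]
      refine sum_congr rfl fun b _ => ?_
      rw [← mul_sum, sum_sum_erase, SimpleGraph.card_neighborFinset_eq_degree,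
        inv_mul_cancel_left₀ (hpos b)]

end Stationarity

section Entropy

variable [Fintype V] (G : SimpleGraph V) [DecidableRel G.Adj]

lemma sum_nrWeight_mul_vertex (hdeg : ∀ v, 2 ≤ G.degree v) {i t : ℕ} (ht : t < i)
    (f : V → ℝ) :
    ∑ w ∈ nrWalks G i, nrWeight G i w * f (vertAt w t) = ∑ a, G.degree a * f a := by
  rw [sum_nrWeight_mul_edge G hdeg ht fun a _ => f a]
  simp only [sum_const, SimpleGraph.card_neighborFinset_eq_degree, nsmul_eq_mul]

lemma sum_nrWeight_mul_log (hdeg : ∀ v, 2 ≤ G.degree v) (k : ℕ) :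
    ∑ w ∈ nrWalks G (k + 1), nrWeight G (k + 1) w *
        log (G.degree (w 0) * ∏ t ∈ Ico 1 (k + 1), ((G.degree (vertAt w t) : ℝ) - 1)) =
      ∑ a, G.degree a * log (G.degree a) + k * ∑ a, G.degree a * log ((G.degree a : ℝ) - 1) := by
  have hpos : ∀ v, (0 : ℝ) < G.degree v - 1 := fun v => sub_pos.2 (by exact_mod_cast hdeg v)
  have hlog : ∀ w : Fin (k + 2) → V,
      log (G.degree (w 0) * ∏ t ∈ Ico 1 (k + 1), ((G.degree (vertAt w t) : ℝ) - 1)) =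
        log (G.degree (vertAt w 0)) + ∑ t ∈ Ico 1 (k + 1), log ((G.degree (vertAt w t) : ℝ) - 1) :=
    fun w => by
      rw [log_mul (by linarith [hpos (w 0)]) (prod_pos fun t _ => hpos _).ne',
        log_prod fun t _ => (hpos _).ne', vertAt_zero]
  simp_rw [hlog, mul_add, sum_add_distrib]
  rw [sum_nrWeight_mul_vertex G hdeg k.succ_pos fun a => log (G.degree a)]
  congr 1
  rw [sum_congr rfl fun w _ => mul_sum .., sum_comm, sum_congr rfl fun t ht =>
    sum_nrWeight_mul_vertex G hdeg (by simp at ht; omega) fun a => log ((G.degree a : ℝ) - 1)]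
  simp

theorem exp_le_expected_nV [Nonempty V] (hdeg : ∀ v, 2 ≤ G.degree v) (k : ℕ) :
    exp ((∑ a, G.degree a * log (G.degree a) +
        k * ∑ a, G.degree a * log ((G.degree a : ℝ) - 1)) / ∑ a, (G.degree a : ℝ)) ≤
      ∑ v, (G.degree v : ℝ) / (∑ a, (G.degree a : ℝ)) * nV G (k + 1) v := by
  set m := ∑ a, (G.degree a : ℝ)
  have hpos : ∀ v, (0 : ℝ) < G.degree v - 1 := fun v => sub_pos.2 (by exact_mod_cast hdeg v)
  have hm : 0 < m := sum_pos (fun v _ => by linarith [hpos v]) univ_nonempty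
  have hmass : ∑ w ∈ nrWalks G (k + 1), nrWeight G (k + 1) w / m = 1 := by
    rw [← sum_div, div_eq_one_iff_eq hm.ne']
    simpa using sum_nrWeight_mul_vertex G hdeg k.succ_pos fun _ => 1
  have hamgm := exp_sum_mul_log_le_sum_mul (nrWalks G (k + 1))
    (p := fun w => nrWeight G (k + 1) w / m)
    (x := fun w => G.degree (w 0) * ∏ t ∈ Ico 1 (k + 1), ((G.degree (vertAt w t) : ℝ) - 1))
    (fun w _ => div_nonneg (nrWeight_nonneg G (fun v => one_le_two.trans (hdeg v)) _ w) hm.le)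
    hmass (fun w _ => mul_pos (by linarith [hpos (w 0)]) (prod_pos fun t _ => hpos _))
  convert hamgm using 1
  · rw [← sum_nrWeight_mul_log G hdeg k, sum_div]
    exact congrArg exp (sum_congr rfl fun w _ => div_mul_eq_mul_div ..).symm
  · rw [sum_mul_nV]
    refine sum_congr rfl fun w _ => ?_
    rw [div_mul_eq_mul_div, mul_left_comm, nrWeight_mul_prod G hdeg, mul_one]

lemma sum_degree_mul_log_average_le [Nonempty V] (hdeg : ∀ v, 2 ≤ G.degree v) (k : ℕ) {d : ℝ}
    (hd : d = (∑ a, (G.degree a : ℝ)) / Fintype.card V) :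
    (∑ a, (G.degree a : ℝ)) * (log d + k * log (d - 1)) ≤
      ∑ a, G.degree a * log (G.degree a) + k * ∑ a, G.degree a * log ((G.degree a : ℝ) - 1) := by
  have hn : (0 : ℝ) < Fintype.card V := by exact_mod_cast Fintype.card_pos
  have hjensen {s : Set ℝ} {f : ℝ → ℝ} (hf : ConvexOn ℝ s f) (hs : ∀ v, (G.degree v : ℝ) ∈ s) :
      Fintype.card V * f d ≤ ∑ v, f (G.degree v) := by
    have := hf.card_mul_map_sum_div_card_le univ_nonempty fun v _ => hs v
    rwa [card_univ, ← hd] at this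
  have hA := hjensen convexOn_mul_log fun v => Set.mem_Ici.2 (Nat.cast_nonneg _)
  have hB := hjensen (convexOn_mul_log_sub one_pos) fun v => by
    simpa using (by exact_mod_cast hdeg v : (2 : ℝ) ≤ G.degree v)
  have hdn : ∑ a, (G.degree a : ℝ) = Fintype.card V * d := by rw [hd, mul_div_cancel₀ _ hn.ne']
  rw [hdn]
  linarith [mul_le_mul_of_nonneg_left hB k.cast_nonneg]

end Entropy

theorem expected_nonreturning_walks_from_random_vertex {V : Type*} [Fintype V]
    (G : SimpleGraph V) [DecidableRel G.Adj] (hmin : 2 ≤ G.minDegree)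
    (d : ℝ) (hd : d = 2 * (G.edgeFinset.card : ℝ) / (Fintype.card V : ℝ))
    (i : ℕ) (hi : 1 ≤ i) :
    ∑ v : V, (G.degree v : ℝ) / (2 * (G.edgeFinset.card : ℝ)) * (nV G i v : ℝ) ≥
      d * (d - 1) ^ (i - 1) := by
  have hdeg : ∀ v, 2 ≤ G.degree v := fun v => hmin.trans (G.minDegree_le_degree v)
  have : Nonempty V := by
    by_contra!
    simp at hmin
  obtain ⟨k, rfl⟩ : ∃ k, i = k + 1 := ⟨i - 1, by omega⟩
  have hm : 2 * (#G.edgeFinset : ℝ) = ∑ a, (G.degree a : ℝ) := by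
    exact_mod_cast G.sum_degrees_eq_twice_card_edges.symm
  rw [hm] at hd ⊢
  have hn : (0 : ℝ) < Fintype.card V := by exact_mod_cast Fintype.card_pos
  have hsum : 2 * (Fintype.card V : ℝ) ≤ ∑ a, (G.degree a : ℝ) := by
    rw [mul_comm, ← nsmul_eq_mul, ← card_univ, ← sum_const]
    exact sum_le_sum fun v _ => by exact_mod_cast hdeg v
  have hd2 : 2 ≤ d := by rwa [hd, le_div_iff₀ hn]
  rw [Nat.add_sub_cancel, ge_iff_le]
  calc d * (d - 1) ^ k = exp (log d + k * log (d - 1)) := by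
        rw [exp_add, exp_nat_mul, exp_log (by linarith), exp_log (by linarith)]
    _ ≤ _ := exp_le_exp.2 <| (le_div_iff₀' (by linarith)).2 <|
        sum_degree_mul_log_average_le G hdeg k hd
    _ ≤ _ := exp_le_expected_nV G hdeg k
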